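/- Let m ≥ 0, let k ∈ ℂ with 0 < |k| < 1, and let λ ∈ ℂ satisfy λ² = m² + 2 − k − k⁻¹ (so that λ² ≠ m² and λ² ≠ m² + 4). Then the squared spectral norm of T₁(k) is given exactly by |T₁(k)|² = |k|² · ( |λ + m|² + |λ − m|² + (|k| + |k|⁻¹) |λ² − m²| ) / ( |λ² − m²| · |λ² − m² − 4| ). -/

import Mathlib

open scoped ComplexOrder
open Matrix

noncomputable section

abbrev Mat2 : Type := Matrix (Fin 2) (Fin 2) ℂ
abbrev Vec2 : Type := EuclideanSpace ℂ (Fin 2)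
abbrev Hsp : Type := lp (fun _ : ℤ => Vec2) 2

/-- A `2×2` complex matrix acting on `ℂ²` as a continuous linear map. -/
def mAct (A : Mat2) : Vec2 →L[ℂ] Vec2 := Matrix.toEuclideanCLM (𝕜 := ℂ) A

/-- The spectral (operator) norm of a `2×2` complex matrix. -/
def specNorm (A : Mat2) : ℝ := ‖mAct A‖

/-- The Hilbert–Schmidt (Frobenius) norm of a `2×2` complex matrix. -/
def hsNorm (A : Mat2) : ℝ := Real.sqrt (∑ i, ∑ j, ‖A i j‖ ^ 2)

def bMat (m : ℝ) : Mat2 := !![(-m : ℂ), 1; 1, (m : ℂ)]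

def aMat : Mat2 := !![0, 0; -1, 0]

/-- `D0` is the free discrete Dirac operator with mass `m`. -/
def IsFreeDirac (m : ℝ) (D0 : Hsp →L[ℂ] Hsp) : Prop :=
  ∀ u : Hsp, ∀ n : ℤ,
    (D0 u) n = mAct aMat.transpose (u (n - 1)) + mAct (bMat m) (u n) + mAct aMat (u (n + 1))

/-- `Vop` is the block-diagonal operator with blocks `υ n`. -/
def IsBlockDiagOp (υ : ℤ → Mat2) (Vop : Hsp →L[ℂ] Hsp) : Prop :=
  ∀ u : Hsp, ∀ n : ℤ, (Vop u) n = mAct (υ n) (u n)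

/-- The spectrum `[−√(m²+4), −m] ∪ [m, √(m²+4)]` as a subset of `ℂ`. -/
def sigma0 (m : ℝ) : Set ℂ :=
  Complex.ofReal '' (Set.Icc (-Real.sqrt (m ^ 2 + 4)) (-m) ∪ Set.Icc m (Real.sqrt (m ^ 2 + 4)))

def T0mat (m : ℝ) (lam k : ℂ) : Mat2 :=
  (k⁻¹ - k)⁻¹ • !![lam - m, 1 - k; 1 - k, lam + m]

def T1mat (m : ℝ) (lam k : ℂ) : Mat2 :=
  (k * (k⁻¹ - k)⁻¹) • !![lam - m, 1 - k; 1 - k⁻¹, lam + m]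

def Tmat (m : ℝ) (lam k : ℂ) : ℤ → Mat2 := fun j =>
  if j = 0 then T0mat m lam k
  else if 0 < j then k ^ (j.toNat - 1) • T1mat m lam k
  else (k ^ ((-j).toNat - 1) • T1mat m lam k).transpose

/-- The square root of a positive semidefinite matrix, as defined in Mathlib (Dec 2024). -/
def Matrix.PosSemidef.sqrt {n : Type*} [Fintype n] [DecidableEq n] {A : Matrix n n ℂ}
    (hA : A.PosSemidef) : Matrix n n ℂ :=
  (hA.1.eigenvectorUnitary : Matrix n n ℂ) * diagonal (((↑) : ℝ → ℂ) ∘ (√·) ∘ hA.1.eigenvalues) *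
    (star hA.1.eigenvectorUnitary : Matrix n n ℂ)

theorem Matrix.PosSemidef.posSemidef_sqrt {n : Type*} [Fintype n] [DecidableEq n]
    {A : Matrix n n ℂ} (hA : A.PosSemidef) : PosSemidef hA.sqrt := by
  have hD : PosSemidef (diagonal (((↑) : ℝ → ℂ) ∘ (√·) ∘ hA.1.eigenvalues)) := by
    refine posSemidef_diagonal_iff.mpr fun i ↦ ?_
    simp only [Function.comp_apply]
    exact Complex.zero_le_real.mpr (Real.sqrt_nonneg _)
  exact hD.mul_mul_conjTranspose_same (hA.1.eigenvectorUnitary : Matrix n n ℂ)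

def wMat (υ : ℤ → Mat2) (n : ℤ) : Mat2 :=
  (Matrix.posSemidef_conjTranspose_mul_self (υ n)).sqrt

def sqrtwMat (υ : ℤ → Mat2) (n : ℤ) : Mat2 :=
  (Matrix.posSemidef_conjTranspose_mul_self (υ n)).posSemidef_sqrt.sqrt

/-- The Birman–Schwinger operator `K(z) = √W (D₀ − z)⁻¹ U √W`. -/
def Kop (D0 sW Uop : Hsp →L[ℂ] Hsp) (z : ℂ) : Hsp →L[ℂ] Hsp :=
  sW * Ring.inverse (D0 - z • (1 : Hsp →L[ℂ] Hsp)) * Uop * sW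

/-- The element of `ℓ²(ℤ, ℂ²)` supported at site `j` equal to the `β`-th standard basis vector. -/
def deltaVec (j : ℤ) (β : Fin 2) : Hsp := lp.single 2 j (EuclideanSpace.single β (1 : ℂ))


/-!
The relation between `λ` and `k` says exactly that `det T₁(k) = 0`, so `T₁(k)` is an outer
product `u vᴴ`. The operator norm of a rank-one operator is `‖u‖ ‖v‖`, which is also its
Frobenius norm; hence `|T₁(k)|²` is the sum of the squared moduli of its entries. These are
evaluated with `1 - k⁻¹ = -(1 - k)/k`, `λ² - m² = -(1 - k)²/k` and `λ² - m² - 4 = -(1 + k)²/k`.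
-/

open InnerProductSpace in
theorem Matrix.toEuclideanCLM_vecMulVec {𝕜 n : Type*} [RCLike 𝕜] [Fintype n] [DecidableEq n]
    (u v : n → 𝕜) :
    toEuclideanCLM (𝕜 := 𝕜) (vecMulVec u v) =
      rankOne 𝕜 (WithLp.toLp 2 u) (WithLp.toLp 2 (star v)) := by
  apply ContinuousLinearMap.coe_injective
  rw [coe_toEuclideanCLM_eq_toEuclideanLin, ← LinearEquiv.eq_symm_apply,
    symm_toEuclideanLin_rankOne]
  simp

theorem Matrix.norm_toEuclideanCLM_vecMulVec {𝕜 n : Type*} [RCLike 𝕜] [Fintype n] [DecidableEq n]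
    (u v : n → 𝕜) :
    ‖toEuclideanCLM (𝕜 := 𝕜) (vecMulVec u v)‖ = ‖WithLp.toLp 2 u‖ * ‖WithLp.toLp 2 v‖ := by
  rw [toEuclideanCLM_vecMulVec, InnerProductSpace.norm_rankOne]
  simp [EuclideanSpace.norm_eq]

theorem Matrix.exists_eq_vecMulVec_of_det_eq_zero {K : Type*} [Field K]
    {A : Matrix (Fin 2) (Fin 2) K} (hA : A.det = 0) : ∃ u v : Fin 2 → K, A = vecMulVec u v := by
  rw [det_fin_two] at hA
  by_cases h0 : A 0 0 = 0
  · by_cases h1 : A 0 1 = 0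
    · refine ⟨![0, 1], A 1, ?_⟩
      ext i j; fin_cases i <;> fin_cases j <;> simp [vecMulVec_apply, h0, h1]
    · refine ⟨![1, A 1 1 / A 0 1], A 0, ?_⟩
      have h10 : A 1 0 = 0 := by simpa [h0, h1] using hA
      ext i j; fin_cases i <;> fin_cases j <;> simp [vecMulVec_apply, h0, h1, h10]
  · refine ⟨![1, A 1 0 / A 0 0], A 0, ?_⟩
    ext i j; fin_cases i <;> fin_cases j <;> simp [vecMulVec_apply, h0]
    field_simp
    linear_combination hA

theorem specNorm_eq_hsNorm_of_det_eq_zero {A : Mat2} (hA : A.det = 0) : specNorm A = hsNorm A := by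
  obtain ⟨u, v, rfl⟩ := exists_eq_vecMulVec_of_det_eq_zero hA
  rw [specNorm, mAct, norm_toEuclideanCLM_vecMulVec, EuclideanSpace.norm_eq,
    EuclideanSpace.norm_eq, hsNorm, ← Real.sqrt_mul (by positivity), Finset.sum_mul_sum]
  simp [vecMulVec_apply, mul_pow]

theorem hsNorm_sq (A : Mat2) : hsNorm A ^ 2 = ∑ i, ∑ j, ‖A i j‖ ^ 2 :=
  Real.sq_sqrt (by positivity)

theorem det_T1mat_eq_zero {m : ℝ} {lam k : ℂ} (hk : k ≠ 0)
    (hrel : lam ^ 2 = (m : ℂ) ^ 2 + 2 - k - k⁻¹) : (T1mat m lam k).det = 0 := by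
  rw [T1mat, det_smul, det_fin_two_of]
  exact mul_eq_zero_of_right _ (by linear_combination hrel - mul_inv_cancel₀ hk)

theorem hsNorm_T1mat_sq (m : ℝ) (lam k : ℂ) :
    hsNorm (T1mat m lam k) ^ 2 = ‖k * (k⁻¹ - k)⁻¹‖ ^ 2 *
      (‖lam - m‖ ^ 2 + ‖1 - k‖ ^ 2 + ‖1 - k⁻¹‖ ^ 2 + ‖lam + m‖ ^ 2) := by
  simp only [hsNorm_sq, T1mat, smul_of, smul_cons, smul_eq_mul, smul_empty, of_apply, cons_val',
    cons_val_fin_one, Fin.sum_univ_two, cons_val_zero, cons_val_one, norm_mul, mul_pow]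
  ring

theorem stmt9_general (m : ℝ) (k lam : ℂ)
    (hk0 : 0 < ‖k‖) (hk1 : ‖k‖ < 1)
    (hrel : lam ^ 2 = (m : ℂ) ^ 2 + 2 - k - k⁻¹) :
    specNorm (T1mat m lam k) ^ 2 =
      ‖k‖ ^ 2 *
        (‖lam + (m : ℂ)‖ ^ 2 + ‖lam - (m : ℂ)‖ ^ 2 +
          (‖k‖ + (‖k‖)⁻¹) * ‖lam ^ 2 - (m : ℂ) ^ 2‖) /
        (‖lam ^ 2 - (m : ℂ) ^ 2‖ * ‖lam ^ 2 - (m : ℂ) ^ 2 - 4‖) := by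
  have hk : k ≠ 0 := norm_pos_iff.mp hk0
  have hk_sub : 1 - k ≠ 0 := sub_ne_zero.mpr fun h => by simp [← h] at hk1
  have hk_add : 1 + k ≠ 0 := fun h => by simp [eq_neg_of_add_eq_zero_right h] at hk1
  have hcoeff : k * (k⁻¹ - k)⁻¹ = k ^ 2 / ((1 - k) * (1 + k)) := by
    rw [show k⁻¹ - k = (1 - k) * (1 + k) / k by field_simp; ring]
    field_simp
  have hinv : 1 - k⁻¹ = -((1 - k) / k) := by field_simp; ring
  have hdiff : lam ^ 2 - (m : ℂ) ^ 2 = -((1 - k) ^ 2 / k) := by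
    rw [hrel]; field_simp; ring
  have hdiff4 : lam ^ 2 - (m : ℂ) ^ 2 - 4 = -((1 + k) ^ 2 / k) := by
    rw [hrel]; field_simp; ring
  rw [specNorm_eq_hsNorm_of_det_eq_zero (det_T1mat_eq_zero hk hrel), hsNorm_T1mat_sq, hcoeff,
    hinv, hdiff4, hdiff]
  have hB : 0 < ‖1 - k‖ := norm_pos_iff.mpr hk_sub
  have hP : 0 < ‖1 + k‖ := norm_pos_iff.mpr hk_add
  simp only [norm_neg, norm_div, norm_mul, norm_pow]
  field_simp
  ring

/-- Exact formula for the squared spectral norm of `T₁(k)`. -/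
theorem stmt9 (m : ℝ) (hm : 0 ≤ m) (k lam : ℂ)
    (hk0 : 0 < ‖k‖) (hk1 : ‖k‖ < 1)
    (hrel : lam ^ 2 = (m : ℂ) ^ 2 + 2 - k - k⁻¹) :
    specNorm (T1mat m lam k) ^ 2 =
      ‖k‖ ^ 2 *
        (‖lam + (m : ℂ)‖ ^ 2 + ‖lam - (m : ℂ)‖ ^ 2 +
          (‖k‖ + (‖k‖)⁻¹) * ‖lam ^ 2 - (m : ℂ) ^ 2‖) /
        (‖lam ^ 2 - (m : ℂ) ^ 2‖ * ‖lam ^ 2 - (m : ℂ) ^ 2 - 4‖) :=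
  stmt9_general m k lam hk0 hk1 hrel
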